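/- Let f : ℝ^d → ℝ be the quadratic function f(x) = xᵀHx for a symmetric matrix H. Let P ∈ ℝ^{d×q} satisfy PᵀP = I_q, let z ∼ N(0, I_q) be a standard Gaussian vector, and for ε > 0 define the two-point estimator g_ε = ((f(x + εPz) − f(x − εPz))/(2ε)) Pz. Then, writing u = Pᵀ∇f(x), the second moment satisfies E‖g_ε‖² = (q+2)‖u‖². -/

import Mathlib

open MeasureTheory ProbabilityTheory Matrix
open scoped InnerProductSpace

/-- The standard Gaussian measure `N(0, I_n)` on `ℝ^n` (with the Euclidean norm). -/
noncomputable def stdGaussian (n : ℕ) : Measure (EuclideanSpace ℝ (Fin n)) :=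
  (Measure.pi fun _ : Fin n => gaussianReal 0 1).map
    (MeasurableEquiv.toLp 2 (Fin n → ℝ))

section Aux
open Real
open scoped NNReal ENNReal

lemma int_pow_gauss (n : ℕ) : Integrable (fun x : ℝ => x ^ n * rexp (-(2⁻¹ : ℝ) * x ^ 2)) := by
  have h := integrable_rpow_mul_exp_neg_mul_sq (b := (2⁻¹:ℝ)) (by norm_num) (s := (n:ℝ))
    (by exact_mod_cast neg_one_lt_zero.trans_le (Nat.cast_nonneg n))
  simpa [Real.rpow_natCast] using h

lemma gauss_rec (n : ℕ) :
    ∫ x : ℝ, x ^ (n+2) * rexp (-(2⁻¹ : ℝ) * x ^ 2)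
      = ((n:ℝ)+1) * ∫ x : ℝ, x ^ n * rexp (-(2⁻¹ : ℝ) * x ^ 2) := by
  set E : ℝ → ℝ := fun x => rexp (-(2⁻¹ : ℝ) * x ^ 2) with hE
  have hint : ∀ m : ℕ, Integrable (fun x : ℝ => x ^ m * E x) := int_pow_gauss
  have hint1 : Integrable (fun x : ℝ => ((n:ℝ)+1) * x ^ n * E x) := by
    have := (hint n).const_mul ((n:ℝ)+1)
    apply this.congr
    filter_upwards with x; ring
  have hEderiv : ∀ x : ℝ, HasDerivAt E (-x * E x) x := by
    intro x
    have h1 : HasDerivAt (fun x : ℝ => -(2⁻¹:ℝ) * x ^ 2) (-(2⁻¹:ℝ) * (2 * x ^ 1)) x :=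
      (hasDerivAt_pow 2 x).const_mul _
    have := h1.exp
    convert this using 1 <;> simp [hE] <;> ring
  have hderiv : ∀ x : ℝ, HasDerivAt (fun x => x ^ (n+1) * E x)
      (((n:ℝ)+1) * x ^ n * E x - x ^ (n+2) * E x) x := by
    intro x
    have := (hasDerivAt_pow (n+1) x).mul (hEderiv x)
    refine this.congr_deriv ?_
    push_cast
    ring
  have hzero : ∫ x : ℝ, (((n:ℝ)+1) * x ^ n * E x - x ^ (n+2) * E x) = 0 :=
    integral_eq_zero_of_hasDerivAt_of_integrable hderiv (hint1.sub (hint (n+2))) (hint (n+1))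
  rw [integral_sub hint1 (hint (n+2))] at hzero
  have h2 : ∫ x : ℝ, ((n:ℝ)+1) * x ^ n * E x = ((n:ℝ)+1) * ∫ x : ℝ, x ^ n * E x := by
    rw [← integral_const_mul]
    congr 1; funext x; ring
  rw [h2] at hzero
  show (∫ x : ℝ, x ^ (n+2) * E x) = ((n:ℝ)+1) * ∫ x : ℝ, x ^ n * E x
  linarith

lemma gauss_odd1 : ∫ x : ℝ, x ^ 1 * rexp (-(2⁻¹ : ℝ) * x ^ 2) = 0 := by
  set E : ℝ → ℝ := fun x => rexp (-(2⁻¹ : ℝ) * x ^ 2) with hE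
  have hEderiv : ∀ x : ℝ, HasDerivAt (fun y => -E y) (x ^ 1 * E x) x := by
    intro x
    have h1 : HasDerivAt (fun x : ℝ => -(2⁻¹:ℝ) * x ^ 2) (-(2⁻¹:ℝ) * (2 * x ^ 1)) x :=
      (hasDerivAt_pow 2 x).const_mul _
    have := h1.exp.neg
    refine this.congr_deriv ?_
    simp [hE]; ring
  have hzero : ∫ x : ℝ, x ^ 1 * E x = 0 :=
    integral_eq_zero_of_hasDerivAt_of_integrable hEderiv (int_pow_gauss 1)
      (((int_pow_gauss 0).neg).congr (by filter_upwards with x; simp [hE]))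
  exact hzero

lemma pdf_eq (x : ℝ) : gaussianPDFReal 0 1 x = (√(2 * π))⁻¹ * rexp (-(2⁻¹:ℝ) * x ^ 2) := by
  unfold gaussianPDFReal
  push_cast
  rw [mul_one, sub_zero]
  congr 1
  ring

lemma gaussian_to_lebesgue (g : ℝ → ℝ) :
    ∫ x, g x ∂(gaussianReal 0 1) = (√(2 * π))⁻¹ * ∫ x, g x * rexp (-(2⁻¹:ℝ) * x ^ 2) := by
  rw [gaussianReal_of_var_ne_zero _ one_ne_zero]
  have h1 : (gaussianPDF 0 1) = fun x => ((Real.toNNReal (gaussianPDFReal 0 1 x) : ℝ≥0) : ℝ≥0∞) := rfl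
  rw [h1, integral_withDensity_eq_integral_smul
    ((measurable_gaussianPDFReal 0 1).real_toNNReal) g]
  rw [← integral_const_mul]
  congr 1; funext x
  rw [NNReal.smul_def, Real.coe_toNNReal _ (gaussianPDFReal_nonneg 0 1 x), pdf_eq]
  rw [smul_eq_mul]; ring

lemma integrable_pow_gaussianReal (n : ℕ) :
    Integrable (fun x : ℝ => x ^ n) (gaussianReal 0 1) := by
  rw [gaussianReal_of_var_ne_zero _ one_ne_zero]
  have h1 : (gaussianPDF 0 1) = fun x => ((Real.toNNReal (gaussianPDFReal 0 1 x) : ℝ≥0) : ℝ≥0∞) := rfl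
  rw [h1, integrable_withDensity_iff_integrable_smul
    ((measurable_gaussianPDFReal 0 1).real_toNNReal)]
  apply ((int_pow_gauss n).const_mul ((√(2 * π))⁻¹)).congr
  filter_upwards with x
  rw [NNReal.smul_def, Real.coe_toNNReal _ (gaussianPDFReal_nonneg 0 1 x), pdf_eq]
  rw [smul_eq_mul]; ring

noncomputable def M (n : ℕ) : ℝ := ∫ x, x ^ n ∂(gaussianReal 0 1)

lemma M_rec (n : ℕ) : M (n+2) = ((n:ℝ)+1) * M n := by
  unfold M
  rw [gaussian_to_lebesgue, gaussian_to_lebesgue, gauss_rec]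
  ring

lemma M_zero : M 0 = 1 := by simp [M]
lemma M_one : M 1 = 0 := by
  unfold M; rw [gaussian_to_lebesgue, gauss_odd1, mul_zero]
lemma M_two : M 2 = 1 := by rw [show 2 = 0+2 from rfl, M_rec, M_zero]; norm_num
lemma M_three : M 3 = 0 := by rw [show 3 = 1+2 from rfl, M_rec, M_one]; ring
lemma M_four : M 4 = 3 := by rw [show 4 = 2+2 from rfl, M_rec, M_two]; norm_num

/-- exponent pattern for the monomial `z i * z j * (z k)^2` -/
def expo {q : ℕ} (i j k l : Fin q) : ℕ :=
  (if l = i then 1 else 0) + (if l = j then 1 else 0) + (if l = k then 2 else 0)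

lemma prod_expo {q : ℕ} (z : Fin q → ℝ) (i j k : Fin q) :
    ∏ l, (z l) ^ (expo i j k l) = z i * z j * (z k) ^ 2 := by
  unfold expo
  simp only [pow_add, Finset.prod_mul_distrib, pow_ite, pow_one, pow_zero,
    Finset.prod_ite_eq', Finset.mem_univ, if_true]

lemma J_eq {q : ℕ} (i j k : Fin q) :
    (∏ l, M (expo i j k l)) = if i = j then (if i = k then 3 else 1) else 0 := by
  by_cases hij : i = j
  · subst hij
    by_cases hik : i = k
    · subst hik
      simp only [if_true]
      rw [Finset.prod_eq_single i]
      · unfold expo; simp [M_four]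
      · intro l _ hl
        unfold expo; simp [hl, M_zero]
      · simp
    · simp only [hik, if_true, if_false]
      apply Finset.prod_eq_one
      intro l _
      unfold expo
      by_cases hli : l = i
      · simp [hli, hik, M_two]
      · by_cases hlk : l = k
        · subst hlk
          simp [hli, (fun h => hik h.symm : ¬ l = i), M_two]
        · simp [hli, hlk, M_zero]
  · simp only [hij, if_false]
    apply Finset.prod_eq_zero (Finset.mem_univ i)
    unfold expo
    by_cases hik : i = k
    · subst hik
      simp [hij, M_three]
    · simp [hij, hik, M_one]

lemma integrable_monomial {q : ℕ} (e : Fin q → ℕ) :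
    Integrable (fun z : Fin q → ℝ => ∏ l, (z l) ^ (e l))
      (Measure.pi fun _ : Fin q => gaussianReal 0 1) :=
  Integrable.fintype_prod (f := fun l (x : ℝ) => x ^ (e l)) (μ := fun _ => gaussianReal 0 1)
    (fun l => integrable_pow_gaussianReal (e l))

lemma integral_monomial {q : ℕ} (e : Fin q → ℕ) :
    ∫ z : Fin q → ℝ, ∏ l, (z l) ^ (e l) ∂(Measure.pi fun _ : Fin q => gaussianReal 0 1)
      = ∏ l, M (e l) :=
  MeasureTheory.integral_fintype_prod_eq_prod (fun l (x : ℝ) => x ^ (e l))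
    (μ := fun _ => gaussianReal 0 1)

lemma key_pi (q : ℕ) (u : Fin q → ℝ) :
    ∫ z : Fin q → ℝ, (∑ i, u i * z i) ^ 2 * (∑ k, (z k) ^ 2)
        ∂(Measure.pi fun _ : Fin q => gaussianReal 0 1)
      = ((q:ℝ) + 2) * ∑ i, (u i) ^ 2 := by
  have expand : ∀ z : Fin q → ℝ, (∑ i, u i * z i) ^ 2 * (∑ k, (z k) ^ 2)
      = ∑ p : Fin q × Fin q × Fin q,
          (u p.1 * u p.2.1) * ∏ l, (z l) ^ (expo p.1 p.2.1 p.2.2 l) := by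
    intro z
    rw [Fintype.sum_prod_type]
    simp_rw [Fintype.sum_prod_type, prod_expo]
    rw [sq, Finset.sum_mul_sum]
    rw [Finset.sum_mul]
    apply Finset.sum_congr rfl
    intro i _
    rw [Finset.sum_mul]
    apply Finset.sum_congr rfl
    intro j _
    rw [Finset.mul_sum]
    apply Finset.sum_congr rfl
    intro k _
    ring
  simp_rw [expand]
  rw [integral_finset_sum _ (fun p _ => ((integrable_monomial _).const_mul _))]
  simp_rw [integral_const_mul, integral_monomial, J_eq]
  rw [Fintype.sum_prod_type]
  simp_rw [Fintype.sum_prod_type]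
  have hrow : ∀ i : Fin q, (∑ j, ∑ k, (u i * u j) *
      (if i = j then (if i = k then 3 else 1) else 0)) = ((q:ℝ) + 2) * (u i)^2 := by
    intro i
    rw [Finset.sum_eq_single i]
    · have : ∀ k : Fin q, (u i * u i) * (if i = i then (if i = k then 3 else 1) else 0)
          = (u i)^2 * ((if i = k then 2 else 0) + 1) := by
        intro k; by_cases h : i = k <;> simp [h] <;> ring
      rw [Finset.sum_congr rfl (fun k _ => this k), ← Finset.mul_sum,
        Finset.sum_add_distrib, Finset.sum_ite_eq]
      simp [Finset.card_univ]
      ring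
    · intro j _ hj
      simp [Ne.symm hj]
    · simp
  simp_rw [hrow]
  rw [← Finset.mul_sum]

lemma norm_sq_eucl {q : ℕ} (u : EuclideanSpace ℝ (Fin q)) : ‖u‖ ^ 2 = ∑ i, (u i) ^ 2 := by
  rw [← real_inner_self_eq_norm_sq, PiLp.inner_apply]
  simp [sq]

lemma key_euclid (q : ℕ) (u : EuclideanSpace ℝ (Fin q)) :
    ∫ z, (⟪u, z⟫_ℝ) ^ 2 * ‖z‖ ^ 2 ∂(stdGaussian q) = ((q:ℝ) + 2) * ‖u‖ ^ 2 := by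
  unfold _root_.stdGaussian
  rw [integral_map_equiv]
  have h1 : ∀ w : Fin q → ℝ,
      (⟪u, MeasurableEquiv.toLp 2 (Fin q → ℝ) w⟫_ℝ) ^ 2
        * ‖MeasurableEquiv.toLp 2 (Fin q → ℝ) w‖ ^ 2
      = (∑ i, u i * w i) ^ 2 * (∑ k, (w k) ^ 2) := by
    intro w
    rw [norm_sq_eucl, PiLp.inner_apply]
    simp [MeasurableEquiv.toLp_apply]
    left; congr 1; exact Finset.sum_congr rfl fun i _ => mul_comm _ _
  simp_rw [h1]
  rw [key_pi, norm_sq_eucl]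

end Aux

/-- for a quadratic `f(x) = xᵀHx` with `H` symmetric, `P ∈ ℝ^{d×q}` with
`PᵀP = I`, `z ∼ N(0, I_q)` and the two-point estimator
`g_ε = ((f(x+εPz) − f(x−εPz))/(2ε)) Pz`, writing `u = Pᵀ∇f(x)`,
we have `E‖g_ε‖² = (q+2)‖u‖²`. -/
theorem second_moment_quadratic (d q : ℕ)
    (H : Matrix (Fin d) (Fin d) ℝ) (hH : H.IsSymm)
    (f : EuclideanSpace ℝ (Fin d) → ℝ)
    (hf : ∀ y, f y = ⟪y, Matrix.toEuclideanLin H y⟫_ℝ)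
    (P : Matrix (Fin d) (Fin q) ℝ) (hP : Pᵀ * P = 1)
    (x : EuclideanSpace ℝ (Fin d)) (ε : ℝ) (hε : 0 < ε) :
    ∫ z, ‖((f (x + ε • Matrix.toEuclideanLin P z) - f (x - ε • Matrix.toEuclideanLin P z))
            / (2 * ε)) • Matrix.toEuclideanLin P z‖ ^ 2 ∂(stdGaussian q)
      = ((q : ℝ) + 2) * ‖Matrix.toEuclideanLin Pᵀ (gradient f x)‖ ^ 2 := by
  set A := Matrix.toEuclideanLin H with hA
  set Pl := Matrix.toEuclideanLin P with hPl
  set Plt := Matrix.toEuclideanLin Pᵀ with hPlt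
  -- adjoint facts
  have hPadj : ∀ (v : EuclideanSpace ℝ (Fin d)) (w : EuclideanSpace ℝ (Fin q)),
      ⟪v, Pl w⟫_ℝ = ⟪Plt v, w⟫_ℝ := by
    intro v w
    have h1 : Plt = LinearMap.adjoint Pl := by
      rw [hPlt, hPl, ← Matrix.toEuclideanLin_conjTranspose_eq_adjoint,
        Matrix.conjTranspose_eq_transpose_of_trivial]
    rw [h1, LinearMap.adjoint_inner_left]
  have hAsym : ∀ (v w : EuclideanSpace ℝ (Fin d)), ⟪v, A w⟫_ℝ = ⟪A v, w⟫_ℝ := by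
    intro v w
    have h1 : A = LinearMap.adjoint A := by
      rw [hA]
      nth_rewrite 1 [show H = Hᴴ by
        rw [Matrix.conjTranspose_eq_transpose_of_trivial, hH.eq]]
      exact Matrix.toEuclideanLin_conjTranspose_eq_adjoint H
    nth_rewrite 2 [h1]
    rw [LinearMap.adjoint_inner_left]
  -- gradient
  have hgrad : gradient f x = (2:ℝ) • A x := by
    have hfun : f = fun y => ⟪y, A y⟫_ℝ := funext hf
    rw [hfun]
    apply HasGradientAt.gradient
    rw [hasGradientAt_iff_hasFDerivAt]
    have hAc : HasFDerivAt (fun y => A y) (LinearMap.toContinuousLinearMap A) x :=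
      (LinearMap.toContinuousLinearMap A).hasFDerivAt
    have h1 : HasFDerivAt (fun y => ⟪y, A y⟫_ℝ) _ x := (hasFDerivAt_id x).inner ℝ hAc
    refine h1.congr_fderiv ?_
    apply ContinuousLinearMap.ext
    intro y
    simp only [ContinuousLinearMap.comp_apply, ContinuousLinearMap.prod_apply,
      fderivInnerCLM_apply, ContinuousLinearMap.coe_id', id_eq,
      LinearMap.coe_toContinuousLinearMap', InnerProductSpace.toDual_apply_apply,
      real_inner_smul_left]
    rw [hAsym x y, real_inner_comm y (A x)]
    ring
  -- finite difference
  have hdiffv : ∀ v : EuclideanSpace ℝ (Fin d), f (x + v) - f (x - v) = 4 * ⟪A x, v⟫_ℝ := by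
    intro v
    rw [hf, hf]
    have h1 : ⟪x, A v⟫_ℝ = ⟪A x, v⟫_ℝ := hAsym x v
    have h2 : ⟪v, A x⟫_ℝ = ⟪A x, v⟫_ℝ := real_inner_comm _ _
    simp only [map_add, map_sub, inner_add_left, inner_add_right, inner_sub_left,
      inner_sub_right]
    linarith
  have hdiff : ∀ w : EuclideanSpace ℝ (Fin q),
      (f (x + ε • Pl w) - f (x - ε • Pl w)) / (2 * ε) = ⟪Plt (gradient f x), w⟫_ℝ := by
    intro w
    rw [hdiffv (ε • Pl w), real_inner_smul_right, hgrad, ← hPadj, real_inner_smul_left]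
    field_simp
    ring
  -- norm preservation
  have hPltPl : ∀ w : EuclideanSpace ℝ (Fin q), Plt (Pl w) = w := by
    intro w
    rw [hPlt, hPl]
    simp only [Matrix.toEuclideanLin_apply]
    simp [Matrix.mulVec_mulVec, hP]
  have hnorm : ∀ w : EuclideanSpace ℝ (Fin q), ‖Pl w‖ ^ 2 = ‖w‖ ^ 2 := by
    intro w
    rw [← real_inner_self_eq_norm_sq, hPadj, hPltPl, real_inner_self_eq_norm_sq]
  -- pointwise integrand
  have hpt : ∀ w : EuclideanSpace ℝ (Fin q),
      ‖((f (x + ε • Pl w) - f (x - ε • Pl w)) / (2 * ε)) • Pl w‖ ^ 2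
        = (⟪Plt (gradient f x), w⟫_ℝ) ^ 2 * ‖w‖ ^ 2 := by
    intro w
    rw [norm_smul, mul_pow, hdiff, hnorm, Real.norm_eq_abs, sq_abs]
  calc ∫ z, ‖((f (x + ε • Pl z) - f (x - ε • Pl z)) / (2 * ε)) • Pl z‖ ^ 2 ∂(stdGaussian q)
      = ∫ z, (⟪Plt (gradient f x), z⟫_ℝ) ^ 2 * ‖z‖ ^ 2 ∂(stdGaussian q) := by
        exact integral_congr_ae (Filter.Eventually.of_forall hpt)
    _ = ((q : ℝ) + 2) * ‖Plt (gradient f x)‖ ^ 2 := key_euclid q _
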